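/- (Fite–Leighton–Wintner oscillation theorem) Let p, q : [a,∞) → ℝ be continuous with p(t) > 0 for all t ≥ a, and assume ∫_a^∞ e_0(t,a)/p(t) d_α t = ∞ and ∫_a^∞ q(t) d_α t = ∞. Then the equation D^α[p·D^α x](t) + q(t)·x(t) = 0 is oscillatory on [a,∞); that is, every nontrivial solution of the equation has infinitely many zeros in [a,∞). -/

import Mathlib

open Set Filter

/-- The conformable proportional derivative `D^α f(t) = κ₁(t) f(t) + κ₀(t) f'(t)`. -/
noncomputable def Dconf (κ₀ κ₁ : ℝ → ℝ) (f : ℝ → ℝ) (t : ℝ) : ℝ :=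
  κ₁ t * f t + κ₀ t * deriv f t

/-- The conformable exponential `e_0(t,s) = exp(-∫_s^t κ₁/κ₀)`. -/
noncomputable def e0 (κ₀ κ₁ : ℝ → ℝ) (t s : ℝ) : ℝ :=
  Real.exp (-(∫ τ in s..t, κ₁ τ / κ₀ τ))

/-- `x` is a solution of the homogeneous self-adjoint equation
`D^α[p D^α x] + q x = 0` on `J`. -/
def IsSolutionSA (κ₀ κ₁ p q : ℝ → ℝ) (J : Set ℝ) (x : ℝ → ℝ) : Prop :=
  (∀ t ∈ J, DifferentiableAt ℝ x t) ∧
  ContinuousOn (Dconf κ₀ κ₁ x) J ∧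
  (∀ t ∈ J, DifferentiableAt ℝ (fun s => p s * Dconf κ₀ κ₁ x s) t) ∧
  ContinuousOn (Dconf κ₀ κ₁ (fun s => p s * Dconf κ₀ κ₁ x s)) J ∧
  ∀ t ∈ J, Dconf κ₀ κ₁ (fun s => p s * Dconf κ₀ κ₁ x s) t + q t * x t = 0

open MeasureTheory intervalIntegral

/-! The Riccati substitution `w = p D^α x / x`, valid wherever `x ≠ 0`, turns the equation into
`w' = -q/κ₀ - w²/(p κ₀)`; the term `κ₁` cancels. If `x` had only finitely many zeros, `w` would
be defined on some `[T, ∞)`. Integrating, `∫ q/κ₀ = ∞` forces `-w ≥ 1 + ρ` eventually, where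
`ρ = ∫ w²/(p κ₀)`, so `ρ' ≥ (1 + ρ)²/(p κ₀)`. Then `1/(1 + ρ)` decreases by at least
`∫ 1/(p κ₀)` while staying positive, so `∫ 1/(p κ₀) < ∞`. Since `κ₁ ≥ 0` gives `e₀ ≤ 1`, this
contradicts `∫ e₀/(p κ₀) = ∞`. -/

theorem ContinuousOn.intervalIntegrable_of_Ici {f : ℝ → ℝ} {r b c : ℝ}
    (hf : ContinuousOn f (Ici r)) (hb : r ≤ b) (hc : r ≤ c) :
    IntervalIntegrable f volume b c :=
  (hf.mono fun _ ht => le_trans (le_min hb hc) ht.1).intervalIntegrable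

theorem tendsto_integral_atTop_of_base_le {f : ℝ → ℝ} {a T : ℝ}
    (hf : ContinuousOn f (Ici a)) (haT : a ≤ T)
    (h : Tendsto (fun b => ∫ t in a..b, f t) atTop atTop) :
    Tendsto (fun b => ∫ t in T..b, f t) atTop atTop := by
  refine (tendsto_atTop_add_const_right atTop (-∫ t in a..T, f t) h).congr' ?_
  filter_upwards [eventually_ge_atTop a] with b hb
  rw [← integral_interval_sub_left (hf.intervalIntegrable_of_Ici le_rfl hb)
    (hf.intervalIntegrable_of_Ici le_rfl haT), sub_eq_add_neg]

theorem tendsto_integral_atTop_mono {f g : ℝ → ℝ} {a : ℝ}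
    (hfg : ∀ t ∈ Ici a, f t ≤ g t) (hg : ContinuousOn g (Ici a))
    (hf : Tendsto (fun b => ∫ t in a..b, f t) atTop atTop) :
    Tendsto (fun b => ∫ t in a..b, g t) atTop atTop := by
  refine tendsto_atTop_mono' atTop ?_ hf
  filter_upwards [eventually_ge_atTop a, hf.eventually_gt_atTop 0] with b hb hpos
  exact integral_mono_on hb (intervalIntegrable_of_integral_ne_zero hpos.ne')
    (hg.intervalIntegrable_of_Ici le_rfl hb) fun t ht => hfg t ht.1

theorem e0_le_one {κ₀ κ₁ : ℝ → ℝ} {s t : ℝ} (hst : s ≤ t)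
    (hκ₀ : ∀ τ ∈ Icc s t, 0 ≤ κ₀ τ) (hκ₁ : ∀ τ ∈ Icc s t, 0 ≤ κ₁ τ) :
    e0 κ₀ κ₁ t s ≤ 1 := by
  rw [e0, Real.exp_le_one_iff, neg_nonpos]
  exact integral_nonneg hst fun τ hτ => div_nonneg (hκ₁ τ hτ) (hκ₀ τ hτ)

theorem DifferentiableAt.hasDerivAt_Dconf {κ₀ κ₁ f : ℝ → ℝ} {t : ℝ}
    (hf : DifferentiableAt ℝ f t) (hκ₀ : κ₀ t ≠ 0) :
    HasDerivAt f ((Dconf κ₀ κ₁ f t - κ₁ t * f t) / κ₀ t) t := by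
  refine hf.hasDerivAt.congr_deriv ?_
  rw [Dconf]
  field_simp
  ring

theorem hasDerivAt_riccati_substitution {κ₀ κ₁ p q x : ℝ → ℝ} {t : ℝ}
    (hx : DifferentiableAt ℝ x t) (hu : DifferentiableAt ℝ (fun s => p s * Dconf κ₀ κ₁ x s) t)
    (heq : Dconf κ₀ κ₁ (fun s => p s * Dconf κ₀ κ₁ x s) t + q t * x t = 0)
    (hκ₀ : κ₀ t ≠ 0) (hxt : x t ≠ 0) :
    HasDerivAt (fun s => p s * Dconf κ₀ κ₁ x s / x s)
      (-(q t / κ₀ t) - (p t * Dconf κ₀ κ₁ x t / x t) ^ 2 / (p t * κ₀ t)) t := by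
  refine ((hu.hasDerivAt_Dconf (κ₁ := κ₁) hκ₀).div
    (hx.hasDerivAt_Dconf (κ₁ := κ₁) hκ₀) hxt).congr_deriv ?_
  rw [eq_sub_of_add_eq heq]
  field_simp
  ring

theorem integral_inv_le_inv_of_sq_div_le_deriv {y g c : ℝ → ℝ} {S b : ℝ} (hSb : S ≤ b)
    (hy : ∀ t ∈ Icc S b, HasDerivAt y (g t) t) (hg : ContinuousOn g (Icc S b))
    (hc : ContinuousOn c (Icc S b)) (hcpos : ∀ t ∈ Icc S b, 0 < c t)
    (hypos : ∀ t ∈ Icc S b, 0 < y t) (hyg : ∀ t ∈ Icc S b, y t ^ 2 / c t ≤ g t) :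
    ∫ t in S..b, (c t)⁻¹ ≤ (y S)⁻¹ := by
  have hyc : ContinuousOn y (Icc S b) := HasDerivAt.continuousOn hy
  have hgy : IntervalIntegrable (fun t => g t / y t ^ 2) volume S b :=
    (hg.div (hyc.pow 2) fun t ht => pow_ne_zero 2 (hypos t ht).ne').intervalIntegrable_of_Icc
      hSb
  have hFTC : ∫ t in S..b, g t / y t ^ 2 = (y S)⁻¹ - (y b)⁻¹ := by
    rw [integral_eq_sub_of_hasDerivAt (f := fun t => -(y t)⁻¹), neg_sub_neg]
    · intro t ht
      rw [uIcc_of_le hSb] at ht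
      refine ((hy t ht).inv (hypos t ht).ne').neg.congr_deriv ?_
      ring
    · exact hgy
  calc ∫ t in S..b, (c t)⁻¹
      ≤ ∫ t in S..b, g t / y t ^ 2 := by
        refine integral_mono_on hSb
          ((hc.inv₀ fun t ht => (hcpos t ht).ne').intervalIntegrable_of_Icc hSb) hgy fun t ht => ?_
        rw [le_div_iff₀ (pow_pos (hypos t ht) 2), ← div_eq_inv_mul]
        exact hyg t ht
    _ = (y S)⁻¹ - (y b)⁻¹ := hFTC
    _ ≤ (y S)⁻¹ := sub_le_self _ (inv_pos.2 (hypos b ⟨hSb, le_rfl⟩)).le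

section Riccati

variable {c Q w : ℝ → ℝ} {T : ℝ}

theorem continuousOn_sq_div_of_riccati (hc : ContinuousOn c (Ici T))
    (hcpos : ∀ t ∈ Ici T, 0 < c t) (hw : ∀ t ∈ Ici T, HasDerivAt w (-Q t - w t ^ 2 / c t) t) :
    ContinuousOn (fun t => w t ^ 2 / c t) (Ici T) :=
  ((HasDerivAt.continuousOn hw).pow 2).div hc fun t ht => (hcpos t ht).ne'

theorem exists_one_add_integral_le_neg_of_riccati (hc : ContinuousOn c (Ici T))
    (hcpos : ∀ t ∈ Ici T, 0 < c t) (hQ : ContinuousOn Q (Ici T))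
    (hw : ∀ t ∈ Ici T, HasDerivAt w (-Q t - w t ^ 2 / c t) t)
    (hQint : Tendsto (fun b => ∫ t in T..b, Q t) atTop atTop) :
    ∃ S, T < S ∧ ∀ t ∈ Ici S, 1 + ∫ τ in S..t, w τ ^ 2 / c τ ≤ -w t := by
  have hgc := continuousOn_sq_div_of_riccati hc hcpos hw
  have hFTC : ∀ b ∈ Ici T,
      w b - w T = -(∫ t in T..b, Q t) - ∫ t in T..b, w t ^ 2 / c t := fun b hb => by
    have hQi := hQ.intervalIntegrable_of_Ici le_rfl hb
    have hgi := hgc.intervalIntegrable_of_Ici le_rfl hb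
    rw [← intervalIntegral.integral_neg, ← integral_sub (f := fun t => -Q t) hQi.neg hgi]
    refine (integral_eq_sub_of_hasDerivAt (fun t ht => hw t ?_) (hQi.neg.sub hgi)).symm
    rw [uIcc_of_le hb] at ht
    exact ht.1
  obtain ⟨S, hS⟩ := eventually_atTop.mp
    ((hQint.eventually_ge_atTop (w T + 1)).and (eventually_gt_atTop T))
  have hTS : T < S := (hS S le_rfl).2
  refine ⟨S, hTS, fun t ht => ?_⟩
  have hTt : T ≤ t := hTS.le.trans ht
  have hsplit := integral_add_adjacent_intervals (hgc.intervalIntegrable_of_Ici le_rfl hTS.le)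
    (hgc.intervalIntegrable_of_Ici hTS.le hTt)
  have hTS_int_nonneg : 0 ≤ ∫ τ in T..S, w τ ^ 2 / c τ :=
    integral_nonneg hTS.le fun τ hτ => div_nonneg (sq_nonneg _) (hcpos τ hτ.1).le
  linarith [hFTC t hTt, (hS t ht).1]

theorem not_tendsto_integral_inv_of_riccati (hc : ContinuousOn c (Ici T))
    (hcpos : ∀ t ∈ Ici T, 0 < c t) (hQ : ContinuousOn Q (Ici T))
    (hw : ∀ t ∈ Ici T, HasDerivAt w (-Q t - w t ^ 2 / c t) t)
    (hQint : Tendsto (fun b => ∫ t in T..b, Q t) atTop atTop) :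
    ¬Tendsto (fun b => ∫ t in T..b, (c t)⁻¹) atTop atTop := by
  intro hcint
  obtain ⟨S, hTS, hwS⟩ := exists_one_add_integral_le_neg_of_riccati hc hcpos hQ hw hQint
  have hSub : Ici S ⊆ Ici T := Ici_subset_Ici.mpr hTS.le
  set ρ : ℝ → ℝ := fun t => ∫ τ in S..t, w τ ^ 2 / c τ
  have hgc := continuousOn_sq_div_of_riccati hc hcpos hw
  have hρ : ∀ t ∈ Ici S, HasDerivAt ρ (w t ^ 2 / c t) t := fun t ht => by
    have hTt : t ∈ Ioi T := lt_of_lt_of_le hTS ht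
    exact integral_hasDerivAt_right (hgc.intervalIntegrable_of_Ici hTS.le (hSub ht))
      ((hgc.mono Ioi_subset_Ici_self).stronglyMeasurableAtFilter isOpen_Ioi t hTt)
      ((hgc.mono Ioi_subset_Ici_self).continuousAt (Ioi_mem_nhds hTt))
  have hρ_nonneg : ∀ t ∈ Ici S, 0 ≤ ρ t := fun t ht =>
    integral_nonneg ht fun τ hτ => div_nonneg (sq_nonneg _) (hcpos τ (hSub hτ.1)).le
  have hbound : ∀ b ∈ Ici S, ∫ t in S..b, (c t)⁻¹ ≤ 1 := fun b hb => by
    have := integral_inv_le_inv_of_sq_div_le_deriv (y := fun t => 1 + ρ t) hb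
      (fun t ht => (hρ t ht.1).const_add 1) (hgc.mono fun t ht => hSub ht.1)
      (hc.mono fun t ht => hSub ht.1) (fun t ht => hcpos t (hSub ht.1))
      (fun t ht => by linarith [hρ_nonneg t ht.1]) fun t ht => by
        have h0 := hρ_nonneg t ht.1
        have h1 := hwS t ht.1
        exact div_le_div_of_nonneg_right (by nlinarith) (hcpos t (hSub ht.1)).le
    simpa [ρ] using this
  have hcS := tendsto_integral_atTop_of_base_le (f := fun t => (c t)⁻¹)
    (hc.inv₀ fun t ht => (hcpos t ht).ne') hTS.le hcint
  obtain ⟨b, hb2, hbS⟩ := ((hcS.eventually_ge_atTop 2).and (eventually_ge_atTop S)).exists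
  linarith [hbound b hbS]

end Riccati

theorem fite_leighton_wintner_general
    (a : ℝ) (κ₀ κ₁ : ℝ → ℝ)
    (hκ₀c : ContinuousOn κ₀ (Ici a))
    (hκ₀pos : ∀ t ∈ Ici a, 0 < κ₀ t) (hκ₁nn : ∀ t ∈ Ici a, 0 ≤ κ₁ t)
    (p q : ℝ → ℝ)
    (hpc : ContinuousOn p (Ici a)) (hqc : ContinuousOn q (Ici a))
    (hp : ∀ t ∈ Ici a, 0 < p t)
    (hpint : Tendsto (fun b => ∫ t in a..b, e0 κ₀ κ₁ t a / (p t * κ₀ t))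
      atTop atTop)
    (hqint : Tendsto (fun b => ∫ t in a..b, q t / κ₀ t) atTop atTop) :
    ∀ x : ℝ → ℝ, IsSolutionSA κ₀ κ₁ p q (Ici a) x →
      (∃ t ∈ Ici a, x t ≠ 0) →
      {t | t ∈ Ici a ∧ x t = 0}.Infinite := by
  rintro x ⟨hx, -, hu, -, heq⟩ -
  by_contra hfin
  obtain ⟨T, hT⟩ : ∃ T, ∀ t ≥ T, a < t ∧ x t ≠ 0 := eventually_atTop.mp <| by
    filter_upwards [atTop_le_cofinite (not_infinite.mp hfin).compl_mem_cofinite,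
      eventually_gt_atTop a] with t hzero hat
    exact ⟨hat, fun h => hzero ⟨hat.le, h⟩⟩
  have hTa : Ici T ⊆ Ici a := fun t ht => (hT t ht).1.le
  have hκ₀ne : ∀ t ∈ Ici a, κ₀ t ≠ 0 := fun t ht => (hκ₀pos t ht).ne'
  have hcpos : ∀ t ∈ Ici a, 0 < p t * κ₀ t := fun t ht => mul_pos (hp t ht) (hκ₀pos t ht)
  have hc : ContinuousOn (fun t => p t * κ₀ t) (Ici a) := hpc.mul hκ₀c
  have hQ : ContinuousOn (fun t => q t / κ₀ t) (Ici a) := hqc.div hκ₀c hκ₀ne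
  have he0 : ∀ t ∈ Ici a, e0 κ₀ κ₁ t a / (p t * κ₀ t) ≤ (p t * κ₀ t)⁻¹ := fun t ht =>
    (div_le_div_of_nonneg_right (e0_le_one ht (fun τ hτ => (hκ₀pos τ hτ.1).le)
      fun τ hτ => hκ₁nn τ hτ.1) (hcpos t ht).le).trans_eq (one_div _)
  refine not_tendsto_integral_inv_of_riccati (hc.mono hTa) (fun t ht => hcpos t (hTa ht))
    (hQ.mono hTa) (fun t ht => hasDerivAt_riccati_substitution (hx t (hTa ht)) (hu t (hTa ht))
      (heq t (hTa ht)) (hκ₀ne t (hTa ht)) (hT t ht).2)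
    (tendsto_integral_atTop_of_base_le hQ (hT T le_rfl).1.le hqint) ?_
  have hcinv := hc.inv₀ fun t ht => (hcpos t ht).ne'
  exact tendsto_integral_atTop_of_base_le hcinv (hT T le_rfl).1.le
    (tendsto_integral_atTop_mono he0 hcinv hpint)

/-- Fite–Leighton–Wintner theorem: if
`∫_a^∞ e₀(t,a)/p(t) d_α t = ∞` and `∫_a^∞ q(t) d_α t = ∞`, then
`D^α[p D^α x] + q x = 0` is oscillatory on `[a,∞)`: every nontrivial solution
has infinitely many zeros in `[a,∞)`. -/
theorem fite_leighton_wintner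
    (a : ℝ) (κ₀ κ₁ : ℝ → ℝ)
    (hκ₀c : ContinuousOn κ₀ (Ici a)) (hκ₁c : ContinuousOn κ₁ (Ici a))
    (hκ₀pos : ∀ t ∈ Ici a, 0 < κ₀ t) (hκ₁nn : ∀ t ∈ Ici a, 0 ≤ κ₁ t)
    (p q : ℝ → ℝ)
    (hpc : ContinuousOn p (Ici a)) (hqc : ContinuousOn q (Ici a))
    (hp : ∀ t ∈ Ici a, 0 < p t)
    (hpint : Tendsto (fun b => ∫ t in a..b, e0 κ₀ κ₁ t a / (p t * κ₀ t))
      atTop atTop)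
    (hqint : Tendsto (fun b => ∫ t in a..b, q t / κ₀ t) atTop atTop) :
    ∀ x : ℝ → ℝ, IsSolutionSA κ₀ κ₁ p q (Ici a) x →
      (∃ t ∈ Ici a, x t ≠ 0) →
      {t | t ∈ Ici a ∧ x t = 0}.Infinite :=
  fite_leighton_wintner_general a κ₀ κ₁ hκ₀c hκ₀pos hκ₁nn p q hpc hqc hp hpint hqint
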